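/- Assume the PACA setting with the Slater condition, and suppose in addition that the perturbation parameters are not summable, i.e. Σ_{k=0}^∞ ε_k = ∞. Then PACA terminates finitely: there exists k ∈ ℕ such that xᵏ ∈ C, i.e. fᵢ(xᵏ) ≤ 0 for all i = 1,…,m. -/
import Mathlib


open Filter
open scoped RealInnerProductSpace

set_option maxHeartbeats 1000000 in
theorem stmt_19 {n m : ℕ} (hm : 0 < m)
    (f : Fin m → EuclideanSpace ℝ (Fin n) → ℝ)
    (hconv : ∀ i, ConvexOn ℝ Set.univ (f i))
    (xhat : EuclideanSpace ℝ (Fin n)) (hslater : ∀ i, f i xhat < 0)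
    (ε : ℕ → ℝ) (hεpos : ∀ k, 0 < ε k) (hεanti : StrictAnti ε)
    (hεlim : Tendsto ε atTop (nhds 0))
    (x : ℕ → EuclideanSpace ℝ (Fin n))
    (u v : Fin m → ℕ → EuclideanSpace ℝ (Fin n))
    (w : ℕ → EuclideanSpace ℝ (Fin n))
    (hsub : ∀ i k, ∀ z, f i (x k) + ⟪u i k, z - x k⟫ ≤ f i z)
    (hune : ∀ i k, 0 < f i (x k) + ε k → u i k ≠ 0)
    (hv : ∀ i k, v i k = (max 0 (f i (x k) + ε k) / ‖u i k‖ ^ 2) • u i k)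
    (hw : ∀ k, w k = (m : ℝ)⁻¹ • ∑ i, v i k)
    (hstep0 : ∀ k, w k = 0 → x (k + 1) = x k)
    (hstep : ∀ k, w k ≠ 0 →
      x (k + 1) = x k - (((m : ℝ)⁻¹ * ∑ i, ‖v i k‖ ^ 2) / ‖w k‖ ^ 2) • w k)
    (hnotsummable : ¬ Summable ε) :
    ∃ k : ℕ, ∀ i, f i (x k) ≤ 0 := by
  by_contra hcon
  push_neg at hcon
  -- hcon : ∀ k, ∃ i, 0 < f i (x k)
  have hm' : (0:ℝ) < m := by exact_mod_cast hm
  haveI : Nonempty (Fin m) := ⟨⟨0, hm⟩⟩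
  -- Slater margin δ
  obtain ⟨δ, hδpos, hδ⟩ : ∃ δ : ℝ, 0 < δ ∧ ∀ i, f i xhat ≤ -δ := by
    obtain ⟨i0, -, hi0⟩ := Finset.exists_min_image Finset.univ
      (fun i => -(f i xhat)) ⟨⟨0, hm⟩, Finset.mem_univ _⟩
    refine ⟨-(f i0 xhat), by linarith [hslater i0], fun i => ?_⟩
    have := hi0 i (Finset.mem_univ i)
    linarith
  -- index from which ε is small
  obtain ⟨K, hK⟩ : ∃ K, ∀ k ≥ K, ε k < δ / 2 := by
    have h := hεlim.eventually (gt_mem_nhds (by positivity : (0:ℝ) < δ / 2))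
    exact eventually_atTop.mp h
  set R := ‖x K - xhat‖ with hR
  have hRnn : (0:ℝ) ≤ R := norm_nonneg _
  -- continuity and bound on ball
  have hcont : ∀ i, Continuous (f i) := fun i =>
    continuousOn_univ.mp ((hconv i).continuousOn isOpen_univ)
  obtain ⟨M, hM⟩ : ∃ M : ℝ, ∀ i, ∀ y ∈ Metric.closedBall xhat (R+1), f i y ≤ M := by
    have hB : IsCompact (Metric.closedBall xhat (R+1)) := isCompact_closedBall _ _
    have hne : (Metric.closedBall xhat (R+1)).Nonempty :=
      ⟨xhat, Metric.mem_closedBall_self (by linarith)⟩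
    choose z hz hzmax using fun i => hB.exists_isMaxOn hne (hcont i).continuousOn
    refine ⟨Finset.univ.sup' Finset.univ_nonempty (fun i => f i (z i)), fun i y hy => ?_⟩
    exact le_trans (hzmax i hy) (Finset.le_sup' (fun j => f j (z j)) (Finset.mem_univ i))
  set L : ℝ := max 1 (M + ε 0) with hLdef
  have hL1 : (1:ℝ) ≤ L := le_max_left _ _
  have hLpos : (0:ℝ) < L := lt_of_lt_of_le one_pos hL1
  -- subgradient bound on the ball
  have hub : ∀ k, ‖x k - xhat‖ ≤ R → ∀ i, 0 < f i (x k) + ε k → ‖u i k‖ ≤ L := by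
    intro k hxk i hi
    have hu0 : 0 < ‖u i k‖ := norm_pos_iff.mpr (hune i k hi)
    set y := x k + ‖u i k‖⁻¹ • u i k with hy
    have h1 : ‖(‖u i k‖⁻¹ : ℝ) • u i k‖ = 1 := by
      rw [norm_smul, Real.norm_eq_abs, abs_of_pos (by positivity)]
      field_simp
    have hin : ⟪u i k, y - x k⟫ = ‖u i k‖ := by
      have : y - x k = ‖u i k‖⁻¹ • u i k := by rw [hy]; abel
      rw [this, real_inner_smul_right, real_inner_self_eq_norm_sq]
      field_simp
    have hyB : y ∈ Metric.closedBall xhat (R+1) := by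
      rw [Metric.mem_closedBall, dist_eq_norm]
      have h2 : y - xhat = (x k - xhat) + ‖u i k‖⁻¹ • u i k := by rw [hy]; abel
      calc ‖y - xhat‖ = ‖(x k - xhat) + ‖u i k‖⁻¹ • u i k‖ := by rw [h2]
        _ ≤ ‖x k - xhat‖ + ‖(‖u i k‖⁻¹ : ℝ) • u i k‖ := norm_add_le _ _
        _ ≤ R + 1 := by rw [h1]; linarith
    have hfy := hsub i k y
    rw [hin] at hfy
    have hMy := hM i y hyB
    have hε0 : ε k ≤ ε 0 := hεanti.antitone (Nat.zero_le k)
    have : ‖u i k‖ ≤ M + ε 0 := by linarith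
    exact le_trans this (le_max_right _ _)
  -- the key one-step decrease
  have key : ∀ k, K ≤ k → ‖x k - xhat‖ ≤ R →
      ‖x (k+1) - xhat‖^2 + (δ / (m * L^2)) * ε k ≤ ‖x k - xhat‖^2 := by
    intro k hk hxk
    obtain ⟨i0, hi0⟩ := hcon k
    have hεδ : ε k < δ / 2 := hK k hk
    have hεk := hεpos k
    have hδε : (0:ℝ) ≤ δ - ε k := by linarith
    -- per-index inequality
    have hterm : ∀ i, ‖v i k‖^2 + ((δ - ε k)/L) * ‖v i k‖ ≤ ⟪v i k, x k - xhat⟫ := by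
      intro i
      rcases le_or_gt (f i (x k) + ε k) 0 with hle | hlt
      · have hvz : v i k = 0 := by rw [hv i k, max_eq_left hle]; simp
        simp [hvz]
      · have huL := hub k hxk i hlt
        have hu0 : 0 < ‖u i k‖ := norm_pos_iff.mpr (hune i k hlt)
        have hmax : max 0 (f i (x k) + ε k) = f i (x k) + ε k := max_eq_right hlt.le
        have hnv : ‖v i k‖ = (f i (x k) + ε k) / ‖u i k‖ := by
          rw [hv i k, hmax, norm_smul, Real.norm_eq_abs, abs_of_pos (by positivity)]
          field_simp
        have hip : ⟪v i k, x k - xhat⟫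
            = ((f i (x k) + ε k) / ‖u i k‖^2) * ⟪u i k, x k - xhat⟫ := by
          rw [hv i k, hmax, real_inner_smul_left]
        have hinner : (f i (x k) + ε k) + (δ - ε k) ≤ ⟪u i k, x k - xhat⟫ := by
          have hsub' := hsub i k xhat
          have h2 : ⟪u i k, x k - xhat⟫ = -⟪u i k, xhat - x k⟫ := by
            rw [← inner_neg_right]
            congr 1
            abel
          have h3 := hδ i
          rw [h2]; linarith
        have hlampos : (0:ℝ) < (f i (x k) + ε k) / ‖u i k‖^2 := by positivity
        have hsq : ‖v i k‖^2 = ((f i (x k) + ε k) / ‖u i k‖^2) * (f i (x k) + ε k) := by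
          rw [hnv]; field_simp
        have hdl : ((δ - ε k)/L) * ‖v i k‖
            ≤ ((f i (x k) + ε k) / ‖u i k‖^2) * (δ - ε k) := by
          have h4 : ((δ - ε k)/L) * ‖v i k‖ ≤ ((δ - ε k)/‖u i k‖) * ‖v i k‖ :=
            mul_le_mul_of_nonneg_right
              (div_le_div_of_nonneg_left hδε hu0 huL) (norm_nonneg _)
          have h5 : ((δ - ε k)/‖u i k‖) * ‖v i k‖
              = ((f i (x k) + ε k) / ‖u i k‖^2) * (δ - ε k) := by
            rw [hnv]; field_simp
          linarith
        have h6 := mul_le_mul_of_nonneg_left hinner hlampos.le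
        rw [hip]
        nlinarith [h6, hdl, hsq]
    -- sum it up
    have hvnn : ∀ i ∈ Finset.univ, (0:ℝ) ≤ ‖v i k‖ := fun i _ => norm_nonneg _
    have hsum : ∑ i, ‖v i k‖^2 + ((δ - ε k)/L) * ∑ i, ‖v i k‖
        ≤ ⟪∑ i, v i k, x k - xhat⟫ := by
      rw [sum_inner, Finset.mul_sum, ← Finset.sum_add_distrib]
      exact Finset.sum_le_sum (fun i _ => hterm i)
    have hlt0 : 0 < f i0 (x k) + ε k := by linarith
    have hvi0 : ε k / L ≤ ‖v i0 k‖ := by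
      have huL := hub k hxk i0 hlt0
      have hu0 : 0 < ‖u i0 k‖ := norm_pos_iff.mpr (hune i0 k hlt0)
      have hnv : ‖v i0 k‖ = (f i0 (x k) + ε k) / ‖u i0 k‖ := by
        rw [hv i0 k, max_eq_right hlt0.le, norm_smul, Real.norm_eq_abs,
          abs_of_pos (by positivity)]
        field_simp
      rw [hnv]
      exact div_le_div₀ (by positivity) (by linarith) hu0 huL
    have hS1 : ε k / L ≤ ∑ i, ‖v i k‖ :=
      le_trans hvi0 (Finset.single_le_sum hvnn (Finset.mem_univ i0))
    have hS2 : (ε k / L)^2 ≤ ∑ i, ‖v i k‖^2 := by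
      have h1 := Finset.single_le_sum (fun i (_ : i ∈ Finset.univ) => sq_nonneg ‖v i k‖)
        (Finset.mem_univ i0)
      have h2 := pow_le_pow_left₀ (by positivity : (0:ℝ) ≤ ε k / L) hvi0 2
      linarith
    set S : ℝ := (m:ℝ)⁻¹ * ∑ i, ‖v i k‖^2 with hSdef
    have hSpos : 0 < S := by
      have : (0:ℝ) < (ε k / L)^2 := by positivity
      have h7 : (0:ℝ) < ∑ i, ‖v i k‖^2 := lt_of_lt_of_le this hS2
      exact mul_pos (by positivity) h7
    set c : ℝ := (δ - ε k) * ε k / (m * L^2) with hcdef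
    have hcnn : 0 ≤ c := by positivity
    have hwip : S + c ≤ ⟪w k, x k - xhat⟫ := by
      rw [hw k, real_inner_smul_left]
      have h8 : ((δ - ε k)/L) * (ε k / L) ≤ ((δ - ε k)/L) * ∑ i, ‖v i k‖ :=
        mul_le_mul_of_nonneg_left hS1 (by positivity)
      have h9 : ∑ i, ‖v i k‖^2 + ((δ - ε k)/L) * (ε k / L) ≤ ⟪∑ i, v i k, x k - xhat⟫ := by
        linarith
      have h10 := mul_le_mul_of_nonneg_left h9 (by positivity : (0:ℝ) ≤ (m:ℝ)⁻¹)
      have h11 : (m:ℝ)⁻¹ * (∑ i, ‖v i k‖^2 + ((δ - ε k)/L) * (ε k / L)) = S + c := by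
        rw [hSdef, hcdef]; field_simp
      linarith
    have hwpos : 0 < ⟪w k, x k - xhat⟫ := by
      have : 0 < S + c := by linarith
      linarith
    have hwne : w k ≠ 0 := by
      intro h
      rw [h] at hwpos
      simp at hwpos
    have hwn : 0 < ‖w k‖ := norm_pos_iff.mpr hwne
    -- ‖w‖² ≤ S
    have hw2 : ‖w k‖^2 ≤ S := by
      have h12 : ‖w k‖ ≤ (m:ℝ)⁻¹ * ∑ i, ‖v i k‖ := by
        rw [hw k, norm_smul, Real.norm_eq_abs, abs_of_pos (by positivity)]
        exact mul_le_mul_of_nonneg_left (norm_sum_le _ _) (by positivity)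
      have h13 : (∑ i, ‖v i k‖)^2 ≤ (m:ℝ) * ∑ i, ‖v i k‖^2 := by
        have := sq_sum_le_card_mul_sum_sq (s := (Finset.univ : Finset (Fin m)))
          (f := fun i => ‖v i k‖)
        simpa using this
      have h14 : 0 ≤ ∑ i, ‖v i k‖ := Finset.sum_nonneg hvnn
      rw [hSdef]
      calc ‖w k‖^2 ≤ ((m:ℝ)⁻¹ * ∑ i, ‖v i k‖)^2 := by
            nlinarith [h12, norm_nonneg (w k)]
        _ = (m:ℝ)⁻¹ * (m:ℝ)⁻¹ * (∑ i, ‖v i k‖)^2 := by ring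
        _ ≤ (m:ℝ)⁻¹ * (m:ℝ)⁻¹ * ((m:ℝ) * ∑ i, ‖v i k‖^2) :=
            mul_le_mul_of_nonneg_left h13 (by positivity)
        _ = (m:ℝ)⁻¹ * ∑ i, ‖v i k‖^2 := by
            field_simp
    set α : ℝ := S / ‖w k‖^2 with hαdef
    have hα1 : 1 ≤ α := (one_le_div (by positivity)).mpr hw2
    have hαS : α * ‖w k‖^2 = S := div_mul_cancel₀ _ (by positivity)
    -- expand the step
    have hexp : ‖x (k+1) - xhat‖^2
        = ‖x k - xhat‖^2 - 2 * α * ⟪w k, x k - xhat⟫ + α * S := by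
      rw [hstep k hwne, ← hSdef, ← hαdef]
      have h15 : x k - α • w k - xhat = (x k - xhat) - α • w k := by abel
      rw [h15, norm_sub_sq_real, real_inner_smul_right, norm_smul, Real.norm_eq_abs,
        abs_of_pos (by linarith : (0:ℝ) < α), mul_pow]
      rw [real_inner_comm]
      nlinarith [hαS]
    have h2c : δ / (m * L^2) * ε k ≤ 2 * c := by
      calc δ / (m * L^2) * ε k = δ * ε k / (m * L^2) := by ring
        _ ≤ 2 * ((δ - ε k) * ε k) / (m * L^2) :=
            (div_le_div_iff_of_pos_right (by positivity)).mpr (by nlinarith)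
        _ = 2 * c := by rw [hcdef]; ring
    nlinarith [mul_le_mul_of_nonneg_left hwip (by linarith : (0:ℝ) ≤ 2 * α), hexp, hα1,
      hSpos, hcnn, h2c]
  -- induction: bounded partial sums
  have hCpos : 0 < δ / (m * L^2) := by positivity
  have hind : ∀ j, ‖x (K+j) - xhat‖^2
      + (δ / (m * L^2)) * ∑ l ∈ Finset.range j, ε (K+l) ≤ R^2 := by
    intro j
    induction j with
    | zero => simp [hR]
    | succ j ih =>
      have hsnn : 0 ≤ ∑ l ∈ Finset.range j, ε (K+l) :=
        Finset.sum_nonneg (fun l _ => (hεpos _).le)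
      have hle : ‖x (K+j) - xhat‖ ≤ R := by
        nlinarith [norm_nonneg (x (K+j) - xhat), ih, mul_nonneg hCpos.le hsnn]
      have hkey := key (K+j) (Nat.le_add_right K j) hle
      have hidx : K + (j+1) = (K+j) + 1 := by omega
      rw [hidx, Finset.sum_range_succ, mul_add]
      linarith
  have hsummable : Summable (fun l => ε (K+l)) := by
    apply summable_of_sum_range_le (fun l => (hεpos _).le) (c := R^2 / (δ / (m * L^2)))
    intro j
    have := hind j
    rw [le_div_iff₀ hCpos]
    nlinarith [norm_nonneg (x (K+j) - xhat), this]
  exact hnotsummable ((summable_nat_add_iff K).mp (by simpa [add_comm] using hsummable))
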